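/- arXiv:2312.00291 — 3 statements merged into one kernel-verified Lean document; each statement's English description precedes it below -/
import Mathlib

section
/- Let n ≥ 1, let D be a real n×n diagonal matrix with diagonal entries d_k > 0, let τ > 0, and let F ∈ ℝⁿ have all components strictly positive. Set C_k = (∑_j F_j)/d_k and let 𝒞 = { P ∈ ℝⁿ : 0 ≤ P_k ≤ C_k for all k } be the corresponding closed box. Suppose Ã is a function from ℝⁿ to real n×n matrices that is continuous on 𝒞 and such that for every P ∈ 𝒞 the matrix Ã(P) has nonpositive off-diagonal entries and nonnegative column sums. Then for every P ∈ 𝒞 the matrix D + τÃ(P) is invertible, the map φ defined by φ(P) = (D + τÃ(P))⁻¹F is continuous on 𝒞, φ maps 𝒞 into 𝒞, and moreover every component of φ(P) is strictly positive for every P ∈ 𝒞. -/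
open Matrix BigOperators

/-- The closed box `∏_k [0, c_k]` in `ℝⁿ`. -/
def box (n : ℕ) (c : Fin n → ℝ) : Set (Fin n → ℝ) :=
  {P | ∀ k, 0 ≤ P k ∧ P k ≤ c k}

/-- If a matrix has nonpositive off-diagonal entries and strictly positive row
sums, then any solution of `A *ᵥ y = g` with `g ≥ 0` satisfies `y ≥ 0`. -/
lemma nonneg_solution {n : ℕ} (A : Matrix (Fin n) (Fin n) ℝ)
    (hoff : ∀ i j, i ≠ j → A i j ≤ 0) (hrow : ∀ i, 0 < ∑ j, A i j)
    (y g : Fin n → ℝ) (hAy : A *ᵥ y = g) (hg : ∀ i, 0 ≤ g i) : ∀ i, 0 ≤ y i := by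
  by_contra h
  push_neg at h
  obtain ⟨i, hi⟩ := h
  obtain ⟨k, -, hk⟩ := Finset.exists_min_image Finset.univ y ⟨i, Finset.mem_univ i⟩
  have hky : y k ≤ y i := hk i (Finset.mem_univ i)
  have hkneg : y k < 0 := lt_of_le_of_lt hky hi
  have hgk : g k = ∑ j, A k j * y j := by
    rw [← hAy]; rfl
  have hle : ∑ j, A k j * y j ≤ (∑ j, A k j) * y k := by
    rw [Finset.sum_mul]
    refine Finset.sum_le_sum fun j _ => ?_
    by_cases hjk : j = k
    · rw [hjk]
    · exact mul_le_mul_of_nonpos_left (hk j (Finset.mem_univ j)) (hoff k j (Ne.symm hjk))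
  have : g k < 0 := by
    rw [hgk]
    exact lt_of_le_of_lt hle (mul_neg_of_pos_of_neg (hrow k) hkneg)
  exact absurd (hg k) (not_le.mpr this)

/-- the fixed-point map `φ(P) = (D + τ Ã(P))⁻¹ F` is a well-defined
continuous self-map of the box `𝒞 = ∏_k [0, (∑_j F_j)/d_k]`, with entrywise
strictly positive values. -/
theorem fixed_point_map_continuous_self_map
    (n : ℕ) (hn : 1 ≤ n) (d : Fin n → ℝ) (hd : ∀ k, 0 < d k)
    (τ : ℝ) (hτ : 0 < τ) (F : Fin n → ℝ) (hF : ∀ k, 0 < F k)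
    (Atil : (Fin n → ℝ) → Matrix (Fin n) (Fin n) ℝ)
    (hcont : ContinuousOn Atil (box n fun k => (∑ j, F j) / d k))
    (hoff : ∀ P ∈ box n fun k => (∑ j, F j) / d k,
      ∀ i j, i ≠ j → Atil P i j ≤ 0)
    (hcol : ∀ P ∈ box n fun k => (∑ j, F j) / d k,
      ∀ j, 0 ≤ ∑ i, Atil P i j) :
    (∀ P ∈ box n fun k => (∑ j, F j) / d k,
      IsUnit (Matrix.diagonal d + τ • Atil P).det) ∧
    ContinuousOn (fun P => (Matrix.diagonal d + τ • Atil P)⁻¹ *ᵥ F)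
      (box n fun k => (∑ j, F j) / d k) ∧
    (∀ P ∈ box n fun k => (∑ j, F j) / d k,
      (Matrix.diagonal d + τ • Atil P)⁻¹ *ᵥ F ∈ box n fun k => (∑ j, F j) / d k) ∧
    (∀ P ∈ box n fun k => (∑ j, F j) / d k,
      ∀ k, 0 < ((Matrix.diagonal d + τ • Atil P)⁻¹ *ᵥ F) k) := by
  set S : Set (Fin n → ℝ) := box n fun k => (∑ j, F j) / d k with hS
  -- basic properties of A := diagonal d + τ • Atil P for P ∈ S
  have hAoff : ∀ P ∈ S, ∀ i j, i ≠ j →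
      (Matrix.diagonal d + τ • Atil P) i j ≤ 0 := by
    intro P hP i j hij
    have : (Matrix.diagonal d + τ • Atil P) i j = τ * Atil P i j := by
      simp [Matrix.diagonal_apply_ne d hij]
    rw [this]
    exact mul_nonpos_of_nonneg_of_nonpos hτ.le (hoff P hP i j hij)
  have hAcol : ∀ P ∈ S, ∀ j, d j ≤ ∑ i, (Matrix.diagonal d + τ • Atil P) i j := by
    intro P hP j
    have h1 : ∑ i, (Matrix.diagonal d + τ • Atil P) i j
        = (∑ i, Matrix.diagonal d i j) + τ * ∑ i, Atil P i j := by
      rw [Finset.mul_sum, ← Finset.sum_add_distrib]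
      refine Finset.sum_congr rfl fun i _ => ?_
      simp [Matrix.add_apply]
    have h2 : ∑ i, Matrix.diagonal d i j = d j := by
      rw [Finset.sum_eq_single j]
      · simp
      · intro i _ hij; exact Matrix.diagonal_apply_ne d hij
      · intro h; exact absurd (Finset.mem_univ j) h
    rw [h1, h2]
    nlinarith [hcol P hP j]
  have hAdiag : ∀ P ∈ S, ∀ k, 0 < (Matrix.diagonal d + τ • Atil P) k k := by
    intro P hP k
    have h1 : ∑ i ∈ Finset.univ.erase k, (Matrix.diagonal d + τ • Atil P) i k ≤ 0 :=
      Finset.sum_nonpos fun i hi =>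
        hAoff P hP i k (Finset.ne_of_mem_erase hi)
    have h2 : ∑ i, (Matrix.diagonal d + τ • Atil P) i k
        = (Matrix.diagonal d + τ • Atil P) k k
          + ∑ i ∈ Finset.univ.erase k, (Matrix.diagonal d + τ • Atil P) i k :=
      (Finset.add_sum_erase _ _ (Finset.mem_univ k)).symm
    have := hAcol P hP k
    rw [h2] at this
    linarith [hd k]
  have hdet : ∀ P ∈ S, (Matrix.diagonal d + τ • Atil P).det ≠ 0 := by
    intro P hP
    apply det_ne_zero_of_sum_col_lt_diag
    intro k
    have h1 : ∑ i ∈ Finset.univ.erase k, ‖(Matrix.diagonal d + τ • Atil P) i k‖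
        = - ∑ i ∈ Finset.univ.erase k, (Matrix.diagonal d + τ • Atil P) i k := by
      rw [← Finset.sum_neg_distrib]
      refine Finset.sum_congr rfl fun i hi => ?_
      rw [Real.norm_eq_abs, abs_of_nonpos (hAoff P hP i k (Finset.ne_of_mem_erase hi))]
    have h2 : ∑ i, (Matrix.diagonal d + τ • Atil P) i k
        = (Matrix.diagonal d + τ • Atil P) k k
          + ∑ i ∈ Finset.univ.erase k, (Matrix.diagonal d + τ • Atil P) i k :=
      (Finset.add_sum_erase _ _ (Finset.mem_univ k)).symm
    have h3 := hAcol P hP k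
    rw [h2] at h3
    rw [h1, Real.norm_eq_abs, abs_of_pos (hAdiag P hP k)]
    linarith [hd k]
  have hunit : ∀ P ∈ S, IsUnit (Matrix.diagonal d + τ • Atil P).det :=
    fun P hP => isUnit_iff_ne_zero.mpr (hdet P hP)
  -- the solution x := A⁻¹ *ᵥ F solves A *ᵥ x = F
  have hsol : ∀ P ∈ S,
      (Matrix.diagonal d + τ • Atil P) *ᵥ
        ((Matrix.diagonal d + τ • Atil P)⁻¹ *ᵥ F) = F := by
    intro P hP
    rw [Matrix.mulVec_mulVec, Matrix.mul_nonsing_inv _ (hunit P hP), Matrix.one_mulVec]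
  -- inverse has nonnegative entries
  have hinvnn : ∀ P ∈ S, ∀ i j, 0 ≤ (Matrix.diagonal d + τ • Atil P)⁻¹ i j := by
    intro P hP i j
    set A := Matrix.diagonal d + τ • Atil P with hA
    have hdetT : Aᵀ.det ≠ 0 := by rw [Matrix.det_transpose]; exact hdet P hP
    have hunitT : IsUnit Aᵀ.det := isUnit_iff_ne_zero.mpr hdetT
    have hz : Aᵀ *ᵥ ((Aᵀ)⁻¹ *ᵥ Pi.single i 1) = Pi.single i 1 := by
      rw [Matrix.mulVec_mulVec, Matrix.mul_nonsing_inv _ hunitT, Matrix.one_mulVec]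
    have hnn : ∀ m, 0 ≤ ((Aᵀ)⁻¹ *ᵥ Pi.single i 1) m := by
      refine nonneg_solution Aᵀ (fun a b hab => hAoff P hP b a (Ne.symm hab))
        (fun a => lt_of_lt_of_le (hd a) (hAcol P hP a)) _ _ hz fun m => ?_
      by_cases hmi : m = i
      · subst hmi; simp
      · simp [Pi.single_apply, hmi]
    have hval : ((Aᵀ)⁻¹ *ᵥ Pi.single i 1) j = (Aᵀ)⁻¹ j i := by
      simp [Matrix.mulVec, dotProduct, Pi.single_apply]
    have htrans : (Aᵀ)⁻¹ j i = A⁻¹ i j := by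
      rw [← Matrix.transpose_nonsing_inv]; rfl
    have := hnn j
    rw [hval, htrans] at this
    exact this
  -- nonnegativity of the solution
  have hxnn : ∀ P ∈ S, ∀ k, 0 ≤ ((Matrix.diagonal d + τ • Atil P)⁻¹ *ᵥ F) k := by
    intro P hP k
    have : ((Matrix.diagonal d + τ • Atil P)⁻¹ *ᵥ F) k
        = ∑ j, (Matrix.diagonal d + τ • Atil P)⁻¹ k j * F j := rfl
    rw [this]
    exact Finset.sum_nonneg fun j _ =>
      mul_nonneg (hinvnn P hP k j) (hF j).le
  -- strict positivity
  have hxpos : ∀ P ∈ S, ∀ k, 0 < ((Matrix.diagonal d + τ • Atil P)⁻¹ *ᵥ F) k := by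
    intro P hP k
    set A := Matrix.diagonal d + τ • Atil P with hA
    set x := A⁻¹ *ᵥ F with hx
    have hFk : F k = ∑ j, A k j * x j := by
      conv_lhs => rw [← hsol P hP]
      rfl
    have hrest : ∑ j ∈ Finset.univ.erase k, A k j * x j ≤ 0 :=
      Finset.sum_nonpos fun j hj =>
        mul_nonpos_of_nonpos_of_nonneg
          (hAoff P hP k j (Finset.ne_of_mem_erase hj).symm) (hxnn P hP j)
    have hsplit : ∑ j, A k j * x j
        = A k k * x k + ∑ j ∈ Finset.univ.erase k, A k j * x j :=
      (Finset.add_sum_erase _ _ (Finset.mem_univ k)).symm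
    have hkk : 0 < A k k * x k := by
      have := hF k
      rw [hFk, hsplit] at this
      linarith
    nlinarith [hAdiag P hP k, hxnn P hP k, hkk]
  -- upper bound: self-map of the box
  have hself : ∀ P ∈ S, (Matrix.diagonal d + τ • Atil P)⁻¹ *ᵥ F ∈ S := by
    intro P hP
    set A := Matrix.diagonal d + τ • Atil P with hA
    set x := A⁻¹ *ᵥ F with hx
    intro k
    refine ⟨hxnn P hP k, ?_⟩
    have hsum : ∑ i, F i = ∑ j, (∑ i, A i j) * x j := by
      conv_lhs => rw [← hsol P hP]
      have : ∀ i, (A *ᵥ x) i = ∑ j, A i j * x j := fun i => rfl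
      rw [Finset.sum_congr rfl fun i _ => this i]
      simp_rw [Finset.sum_mul]
      rw [Finset.sum_comm]
    have h1 : ∀ j, d j * x j ≤ (∑ i, A i j) * x j := fun j =>
      mul_le_mul_of_nonneg_right (hAcol P hP j) (hxnn P hP j)
    have h2 : d k * x k ≤ ∑ j, d j * x j := by
      refine Finset.single_le_sum (f := fun j => d j * x j) (fun j _ => ?_) (Finset.mem_univ k)
      exact mul_nonneg (hd j).le (hxnn P hP j)
    have h3 : ∑ j, d j * x j ≤ ∑ j, (∑ i, A i j) * x j :=
      Finset.sum_le_sum fun j _ => h1 j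
    rw [le_div_iff₀ (hd k)]
    rw [hsum]
    nlinarith
  -- continuity
  have hfc : ContinuousOn (fun P => Matrix.diagonal d + τ • Atil P) S :=
    continuousOn_const.add (hcont.const_smul τ)
  have hinvc : ContinuousOn (fun P => (Matrix.diagonal d + τ • Atil P)⁻¹) S := by
    intro P hP
    have h1 : ContinuousAt Inv.inv (Matrix.diagonal d + τ • Atil P) := by
      apply continuousAt_matrix_inv
      rw [Ring.inverse_eq_inv']
      exact continuousAt_inv₀ (hdet P hP)
    show ContinuousWithinAt (Inv.inv ∘ fun P => Matrix.diagonal d + τ • Atil P) S P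
    exact ContinuousAt.comp_continuousWithinAt (f := fun P => Matrix.diagonal d + τ • Atil P) h1 (hfc P hP)
  have hφc : ContinuousOn (fun P => (Matrix.diagonal d + τ • Atil P)⁻¹ *ᵥ F) S := by
    have hmv : Continuous fun M : Matrix (Fin n) (Fin n) ℝ => M *ᵥ F :=
      continuous_id.matrix_mulVec continuous_const
    exact hmv.comp_continuousOn hinvc
  exact ⟨hunit, hφc, hself, hxpos⟩
end

section
/- Let n ≥ 1 and d > 0. Let D be a real n×n diagonal matrix with every diagonal entry ≥ d, let A and B be real n×n matrices with ‖A‖_{∞,op} ≤ C and ‖B‖_{∞,op} ≤ C for some C > 0, and let x, y ∈ ℝⁿ with ‖x‖_∞ ≤ C' and ‖y‖_∞ ≤ C' for some C' > 0. Suppose 0 < τ ≤ d/(2C) and (D + τA)x = (D + τB)y. Then ‖x − y‖_∞ ≤ (2τC'/d) · ‖A − B‖_{∞,op}. -/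
/-!
Subtracting the two sides of `(D + τA)x = (D + τB)y` gives `D(x - y) = τ((B - A)y - A(x - y))`.
As `D` is diagonal with entries `≥ d`, the left side has norm at least `d‖x - y‖`, so
`d‖x - y‖ ≤ τ‖A - B‖C' + τC‖x - y‖`, and the choice `τC ≤ d/2` absorbs the last term.
-/

open Matrix BigOperators

/-- The maximum norm `‖v‖_∞ = max_k |v_k|` of a vector in `ℝⁿ`. -/
def vecInfNorm {n : ℕ} [NeZero n] (v : Fin n → ℝ) : ℝ :=
  Finset.univ.sup' Finset.univ_nonempty fun k => |v k|

/-- The operator norm induced by `‖·‖_∞`, i.e. the maximum absolute row sum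
`‖M‖_{∞,op} = max_i ∑_j |M_{ij}|`. -/
def matInfNorm {n : ℕ} [NeZero n] (M : Matrix (Fin n) (Fin n) ℝ) : ℝ :=
  Finset.univ.sup' Finset.univ_nonempty fun i => ∑ j, |M i j|

attribute [local instance] Matrix.linftyOpNormedAddCommGroup

theorem sup'_norm_eq_pi_norm {ι E : Type*} [Fintype ι] [Nonempty ι] [SeminormedAddCommGroup E]
    (f : ι → E) : Finset.univ.sup' Finset.univ_nonempty (fun i => ‖f i‖) = ‖f‖ :=
  le_antisymm (Finset.sup'_le _ _ fun i _ => norm_le_pi_norm f i)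
    ((pi_norm_le_iff_of_nonempty f).2 fun i => Finset.le_sup' (fun i => ‖f i‖) (Finset.mem_univ i))

theorem vecInfNorm_eq_norm {n : ℕ} [NeZero n] (v : Fin n → ℝ) : vecInfNorm v = ‖v‖ :=
  sup'_norm_eq_pi_norm v

theorem matInfNorm_eq_norm {n : ℕ} [NeZero n] (M : Matrix (Fin n) (Fin n) ℝ) :
    matInfNorm M = ‖M‖ := by
  have row_sum_eq (i : Fin n) : ∑ j, |M i j| = ‖WithLp.toLp 1 (M i)‖ := by
    simp [PiLp.norm_eq_of_L1, Real.norm_eq_abs]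
  simp_rw [matInfNorm, row_sum_eq]
  exact sup'_norm_eq_pi_norm fun i => WithLp.toLp 1 (M i)

theorem mul_norm_le_norm_diagonal_mulVec {ι : Type*} [Fintype ι] [DecidableEq ι] {d : ℝ}
    (hd : 0 < d) {dv : ι → ℝ} (hdv : ∀ k, d ≤ dv k) (v : ι → ℝ) :
    d * ‖v‖ ≤ ‖diagonal dv *ᵥ v‖ := by
  rw [← le_div_iff₀' hd, pi_norm_le_iff_of_nonneg (by positivity)]
  intro k
  rw [le_div_iff₀' hd]
  calc d * ‖v k‖ ≤ ‖dv k‖ * ‖v k‖ := by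
        gcongr
        exact (hdv k).trans (Real.le_norm_self _)
    _ = ‖(diagonal dv *ᵥ v) k‖ := by rw [mulVec_diagonal, norm_mul]
    _ ≤ ‖diagonal dv *ᵥ v‖ := norm_le_pi_norm _ k

theorem diagonal_mulVec_sub_of_add_smul_mulVec_eq {ι R : Type*} [Fintype ι] [DecidableEq ι]
    [CommRing R] {dv x y : ι → R} {τ : R} {A B : Matrix ι ι R}
    (h : (diagonal dv + τ • A) *ᵥ x = (diagonal dv + τ • B) *ᵥ y) :
    diagonal dv *ᵥ (x - y) = τ • ((B - A) *ᵥ y - A *ᵥ (x - y)) := by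
  simp only [add_mulVec, smul_mulVec, sub_mulVec, mulVec_sub] at h ⊢
  linear_combination (norm := module) h

theorem perturbation_inequality_general
    (n : ℕ) [NeZero n] (d : ℝ) (hd : 0 < d)
    (dv : Fin n → ℝ) (hdv : ∀ k, d ≤ dv k)
    (C C' : ℝ) (hC : 0 < C)
    (A B : Matrix (Fin n) (Fin n) ℝ)
    (hA : matInfNorm A ≤ C)
    (x y : Fin n → ℝ) (hy : vecInfNorm y ≤ C')
    (τ : ℝ) (hτ : 0 < τ) (hτ2 : τ ≤ d / (2 * C))
    (heq : (Matrix.diagonal dv + τ • A) *ᵥ x = (Matrix.diagonal dv + τ • B) *ᵥ y) :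
    vecInfNorm (x - y) ≤ (2 * τ * C' / d) * matInfNorm (A - B) := by
  simp only [vecInfNorm_eq_norm, matInfNorm_eq_norm] at hA hy ⊢
  have hτC : τ * C ≤ d / 2 := by
    rw [le_div_iff₀ (by positivity)] at hτ2
    linarith
  have hBy : ‖(B - A) *ᵥ y‖ ≤ ‖A - B‖ * C' :=
    (linfty_opNorm_mulVec _ _).trans (by rw [norm_sub_rev]; gcongr)
  have hAe : ‖A *ᵥ (x - y)‖ ≤ C * ‖x - y‖ :=
    (linfty_opNorm_mulVec _ _).trans (by gcongr)
  have key : d * ‖x - y‖ ≤ τ * (‖A - B‖ * C' + C * ‖x - y‖) :=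
    calc d * ‖x - y‖ ≤ ‖diagonal dv *ᵥ (x - y)‖ := mul_norm_le_norm_diagonal_mulVec hd hdv _
      _ = τ * ‖(B - A) *ᵥ y - A *ᵥ (x - y)‖ := by
        rw [diagonal_mulVec_sub_of_add_smul_mulVec_eq heq, norm_smul, Real.norm_of_nonneg hτ.le]
      _ ≤ τ * (‖A - B‖ * C' + C * ‖x - y‖) := by
        gcongr
        exact (norm_sub_le _ _).trans (add_le_add hBy hAe)
  rw [div_mul_eq_mul_div, le_div_iff₀ hd]
  nlinarith [mul_le_mul_of_nonneg_right hτC (norm_nonneg (x - y))]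

/-- perturbation inequality
`‖x − y‖_∞ ≤ (2τC'/d) ‖A − B‖_{∞,op}` when `(D + τA)x = (D + τB)y`. -/
theorem perturbation_inequality
    (n : ℕ) [NeZero n] (d : ℝ) (hd : 0 < d)
    (dv : Fin n → ℝ) (hdv : ∀ k, d ≤ dv k)
    (C C' : ℝ) (hC : 0 < C) (hC' : 0 < C')
    (A B : Matrix (Fin n) (Fin n) ℝ)
    (hA : matInfNorm A ≤ C) (hB : matInfNorm B ≤ C)
    (x y : Fin n → ℝ) (hx : vecInfNorm x ≤ C') (hy : vecInfNorm y ≤ C')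
    (τ : ℝ) (hτ : 0 < τ) (hτ2 : τ ≤ d / (2 * C))
    (heq : (Matrix.diagonal dv + τ • A) *ᵥ x = (Matrix.diagonal dv + τ • B) *ᵥ y) :
    vecInfNorm (x - y) ≤ (2 * τ * C' / d) * matInfNorm (A - B) :=
  perturbation_inequality_general n d hd dv hdv C C' hC A B hA x y hy τ hτ hτ2 heq
end

section
/- Let n ≥ 1, let A be an invertible real n×n matrix with all entries of A⁻¹ nonnegative, let D be a real n×n diagonal matrix with diagonal entries d_k > 0 and let B be a real n×n matrix with nonnegative column sums such that A = D + B. If F ∈ ℝⁿ has all components strictly positive and x = A⁻¹F, then for every index k one has 0 < x_k ≤ (∑_j F_j)/d_k. -/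
open Matrix BigOperators

/-!
Since `A⁻¹` is nonnegative and, being invertible, has no zero row, `x = A⁻¹ F` is strictly
positive for strictly positive `F`. Summing the equations `A x = F` gives
`∑ F = ∑ⱼ cⱼ xⱼ`, where `cⱼ = d_j + ∑ᵢ Bᵢⱼ ≥ d_j` is the `j`-th column sum of `A`; every term is
nonnegative, so `d_k x_k ≤ ∑ F`.
-/

namespace Matrix

variable {m n R : Type*} [Fintype n]

theorem row_ne_zero_of_mul_eq_one [Semiring R] [Nontrivial R] [DecidableEq m]
    {M : Matrix m n R} {N : Matrix n m R} (h : M * N = 1) (i : m) : M i ≠ 0 := by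
  intro hi
  have hii := congrFun (congrFun h i) i
  simp [mul_apply, hi] at hii

theorem mulVec_apply_pos [Semiring R] [PartialOrder R] [IsStrictOrderedRing R]
    {M : Matrix m n R} {v : n → R} {i : m} (hM : 0 ≤ M i) (hi : M i ≠ 0)
    (hv : ∀ j, 0 < v j) : 0 < (M *ᵥ v) i := by
  obtain ⟨j, hj⟩ := Function.ne_iff.mp hi
  exact Finset.sum_pos' (fun j _ => mul_nonneg (hM j) (hv j).le)
    ⟨j, Finset.mem_univ j, mul_pos ((hM j).lt_of_ne' hj) (hv j)⟩

variable [Fintype m]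

theorem sum_mulVec_eq_sum_colSum_mul [CommSemiring R] (M : Matrix m n R) (x : n → R) :
    ∑ i, (M *ᵥ x) i = ∑ j, (∑ i, M i j) * x j := by
  simp only [mulVec, dotProduct, Finset.sum_mul]
  exact Finset.sum_comm

theorem colSum_mul_le_sum_mulVec [CommSemiring R] [PartialOrder R] [IsOrderedRing R]
    {M : Matrix m n R} {x : n → R} (hM : ∀ j, 0 ≤ ∑ i, M i j) (hx : 0 ≤ x) (k : n) :
    (∑ i, M i k) * x k ≤ ∑ i, (M *ᵥ x) i := by
  rw [sum_mulVec_eq_sum_colSum_mul]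
  exact Finset.single_le_sum (f := fun j => (∑ i, M i j) * x j)
    (fun j _ => mul_nonneg (hM j) (hx j)) (Finset.mem_univ k)

theorem sum_diagonal_add_apply [AddCommMonoid R] [DecidableEq m] (d : m → R)
    (B : Matrix m m R) (j : m) : ∑ i, (diagonal d + B) i j = d j + ∑ i, B i j := by
  simp [Finset.sum_add_distrib, diagonal_apply]

theorem diagonal_mul_le_sum_diagonal_add_mulVec [CommSemiring R] [PartialOrder R]
    [IsOrderedRing R] [DecidableEq m] {d : m → R} {B : Matrix m m R} {x : m → R}
    (hd : 0 ≤ d) (hB : ∀ j, 0 ≤ ∑ i, B i j) (hx : 0 ≤ x) (k : m) :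
    d k * x k ≤ ∑ i, ((diagonal d + B) *ᵥ x) i := by
  have hcol : ∀ j, d j ≤ ∑ i, (diagonal d + B) i j := fun j => by
    rw [sum_diagonal_add_apply]
    exact le_add_of_nonneg_right (hB j)
  calc d k * x k ≤ (∑ i, (diagonal d + B) i k) * x k :=
        mul_le_mul_of_nonneg_right (hcol k) (hx k)
    _ ≤ ∑ i, ((diagonal d + B) *ᵥ x) i :=
      colSum_mul_le_sum_mulVec (fun j => (hd j).trans (hcol j)) hx k

end Matrix

theorem solution_positive_and_bounded_general
    (n : ℕ) (A : Matrix (Fin n) (Fin n) ℝ)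
    (hA : IsUnit A.det) (hAinv : ∀ i j, 0 ≤ A⁻¹ i j)
    (d : Fin n → ℝ) (hd : ∀ k, 0 < d k)
    (B : Matrix (Fin n) (Fin n) ℝ) (hBcol : ∀ j, 0 ≤ ∑ i, B i j)
    (hAeq : A = Matrix.diagonal d + B)
    (F : Fin n → ℝ) (hF : ∀ k, 0 < F k)
    (x : Fin n → ℝ) (hx : x = A⁻¹ *ᵥ F) :
    ∀ k, 0 < x k ∧ x k ≤ (∑ j, F j) / d k := by
  have hAx : A *ᵥ x = F := by
    rw [hx, mulVec_mulVec, mul_nonsing_inv A hA, one_mulVec]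
  have hpos : ∀ k, 0 < x k := fun k =>
    hx ▸ mulVec_apply_pos (hAinv k) (row_ne_zero_of_mul_eq_one (nonsing_inv_mul A hA) k) hF
  intro k
  refine ⟨hpos k, (le_div_iff₀ (hd k)).2 ?_⟩
  calc x k * d k = d k * x k := mul_comm _ _
    _ ≤ ∑ i, (A *ᵥ x) i := hAeq ▸ diagonal_mul_le_sum_diagonal_add_mulVec
        (fun j => (hd j).le) hBcol (fun j => (hpos j).le) k
    _ = ∑ j, F j := by rw [hAx]

/-- positivity and componentwise bound for `x = A⁻¹ F`, where
`A = D + B` is invertible with nonnegative inverse, `D` positive diagonal,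
`B` with nonnegative column sums, and `F` entrywise positive. -/
theorem solution_positive_and_bounded
    (n : ℕ) (hn : 1 ≤ n) (A : Matrix (Fin n) (Fin n) ℝ)
    (hA : IsUnit A.det) (hAinv : ∀ i j, 0 ≤ A⁻¹ i j)
    (d : Fin n → ℝ) (hd : ∀ k, 0 < d k)
    (B : Matrix (Fin n) (Fin n) ℝ) (hBcol : ∀ j, 0 ≤ ∑ i, B i j)
    (hAeq : A = Matrix.diagonal d + B)
    (F : Fin n → ℝ) (hF : ∀ k, 0 < F k)
    (x : Fin n → ℝ) (hx : x = A⁻¹ *ᵥ F) :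
    ∀ k, 0 < x k ∧ x k ≤ (∑ j, F j) / d k :=
  solution_positive_and_bounded_general n A hA hAinv d hd B hBcol hAeq F hF x hx
end
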